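/- arXiv:cs/0110044 — 5 statements merged into one kernel-verified Lean document; each statement's English description precedes it below -/
import Mathlib

section
/- Let X be an XML document and Q a query (over the same label set L). If μ₁ and μ₂ are matchings of X to Q, then their pointwise union μ, defined by μ(n_Q) = μ₁(n_Q) ∪ μ₂(n_Q) for every query node n_Q, is also a matching of X to Q. -/
/-- Operator attached to a query node: and-node or or-node. -/
inductive QOp : Type
  | and : QOp
  | or : QOp
  deriving DecidableEq

/-- Quantifier attached to a query edge: existential or universal. -/
inductive QQuant : Type
  | ex : QQuant
  | all : QQuant
  deriving DecidableEq

/-- A rooted directed tree on a node type `N`, given by a root, a parent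
function (the parent of the root is the root itself), and a depth function.
Every node of depth 0 is the root and the parent of a non-root node has depth
one less; together with finiteness of `N` (imposed in the theorems) this says
every node is reachable from the root and has at most one incoming edge. -/
structure RTree (N : Type) where
  root : N
  parent : N → N
  depth : N → ℕ
  parent_root : parent root = root
  depth_root : depth root = 0
  eq_root_of_depth_eq_zero : ∀ n, depth n = 0 → n = root
  depth_parent : ∀ n, n ≠ root → depth (parent n) + 1 = depth n

namespace RTree

variable {N : Type}

/-- `m` is a child of `n`: `m` is not the root and its parent is `n`. -/
def IsChild (t : RTree N) (n m : N) : Prop :=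
  m ≠ t.root ∧ t.parent m = n

/-- A leaf is a node with no children. -/
def IsLeaf (t : RTree N) (n : N) : Prop :=
  ∀ m, ¬ t.IsChild n m

/-- `m` is a (proper) ancestor of `n`: `m ≠ n` and `m` is an iterated parent
of `n`, i.e. `m` lies on the directed path from the root to `n`. -/
def IsAncestor (t : RTree N) (m n : N) : Prop :=
  m ≠ n ∧ ∃ j, t.parent^[j] n = m

end RTree

/-- An XML document: a rooted directed tree with a labeling function and a
textual-content function (strings modelled by `String`). -/
structure XMLDoc (NX L : Type) where
  tree : RTree NX
  label : NX → L
  text : NX → String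

/-- A query: a rooted directed tree with a labeling function, a content
function (string-matching predicate per node), an operator function, a
quantification function on edges (given as a function on pairs of nodes,
relevant only on parent/child pairs) and a set of projected nodes. -/
structure Query (NQ L : Type) where
  tree : RTree NQ
  label : NQ → L
  content : NQ → String → Bool
  op : NQ → QOp
  quant : NQ → NQ → QQuant
  proj : Set NQ

section Defs

variable {NX NQ L : Type}

/-- A document node `nX` matches a query node `nQ` if their labels agree. -/
def Matches (X : XMLDoc NX L) (Q : Query NQ L) (nX : NX) (nQ : NQ) : Prop :=
  X.label nX = Q.label nQ

/-- `μ` is a matching of the document `X` to the query `Q`: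
(1) the root of `Q` is mapped exactly to the root of `X`;
(2) nodes in `μ nQ` match `nQ`;
(3) if `nX ∈ μ nQ` and `nX` is not the root, then `p(nX) ∈ μ (p(nQ))`. -/
def IsMatching (X : XMLDoc NX L) (Q : Query NQ L) (μ : NQ → Set NX) : Prop :=
  μ Q.tree.root = {X.tree.root} ∧
  (∀ nQ nX, nX ∈ μ nQ → Matches X Q nX nQ) ∧
  (∀ nQ nX, nX ∈ μ nQ → nX ≠ X.tree.root →
    X.tree.parent nX ∈ μ (Q.tree.parent nQ))

/-- The document node `nX` satisfies the query edge `(nQ, n'Q)` w.r.t. `μ`: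
for an existential-edge, some child of `nX` matches `n'Q` and lies in `μ n'Q`;
for a universal-edge, every child of `nX` that matches `n'Q` lies in `μ n'Q`. -/
def SatisfiesEdge (X : XMLDoc NX L) (Q : Query NQ L) (μ : NQ → Set NX)
    (nQ n'Q : NQ) (nX : NX) : Prop :=
  (Q.quant nQ n'Q = QQuant.ex ∧
    ∃ n'X, X.tree.IsChild nX n'X ∧ Matches X Q n'X n'Q ∧ n'X ∈ μ n'Q) ∨
  (Q.quant nQ n'Q = QQuant.all ∧
    ∀ n'X, X.tree.IsChild nX n'X → Matches X Q n'X n'Q → n'X ∈ μ n'Q)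

/-- `μ` is a satisfying matching of `X` to `Q`. -/
def IsSatisfying (X : XMLDoc NX L) (Q : Query NQ L) (μ : NQ → Set NX) : Prop :=
  IsMatching X Q μ ∧
  ∀ nQ nX, nX ∈ μ nQ →
    (Q.tree.IsLeaf nQ → Q.content nQ (X.text nX) = true) ∧
    (¬ Q.tree.IsLeaf nQ → Q.op nQ = QOp.or →
      (Q.content nQ (X.text nX) = true ∨
        ∃ mQ, Q.tree.IsChild nQ mQ ∧ SatisfiesEdge X Q μ nQ mQ nX)) ∧
    (¬ Q.tree.IsLeaf nQ → Q.op nQ = QOp.and →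
      (Q.content nQ (X.text nX) = true ∧
        ∀ mQ, Q.tree.IsChild nQ mQ → SatisfiesEdge X Q μ nQ mQ nX))

/-- The status `S(mQ)` of a child `mQ` of `nQ` w.r.t. a document node `nX`,
relative to a predicate `M'` (used to define `M` recursively). -/
def SStatus (X : XMLDoc NX L) (Q : Query NQ L) (M' : NQ → NX → Prop)
    (nQ mQ : NQ) (nX : NX) : Prop :=
  (Q.quant nQ mQ = QQuant.ex ∧
    ∃ mX, X.tree.IsChild nX mX ∧ Matches X Q mX mQ ∧ M' mQ mX) ∨
  (Q.quant nQ mQ = QQuant.all ∧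
    ∀ mX, X.tree.IsChild nX mX → Matches X Q mX mQ → M' mQ mX)

/-- Fuelled version of the predicate `M(nQ, nX)`; the fuel only needs to
exceed the height of the subtree of the query below `nQ`. -/
def MAux (X : XMLDoc NX L) (Q : Query NQ L) : ℕ → NQ → NX → Prop
  | 0, _, _ => False
  | k + 1, nQ, nX =>
      (Q.tree.IsLeaf nQ ∧ Q.content nQ (X.text nX) = true) ∨
      (¬ Q.tree.IsLeaf nQ ∧ Q.op nQ = QOp.or ∧
        (Q.content nQ (X.text nX) = true ∨
          ∃ mQ, Q.tree.IsChild nQ mQ ∧ SStatus X Q (MAux X Q k) nQ mQ nX)) ∨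
      (¬ Q.tree.IsLeaf nQ ∧ Q.op nQ = QOp.and ∧
        (Q.content nQ (X.text nX) = true ∧
          ∀ mQ, Q.tree.IsChild nQ mQ → SStatus X Q (MAux X Q k) nQ mQ nX))

/-- The predicate `M(nQ, nX)` defined by recursion on the finite query tree:
`Fintype.card NQ` always exceeds the height of any subtree of the query. -/
def MPred [Fintype NQ] (X : XMLDoc NX L) (Q : Query NQ L)
    (nQ : NQ) (nX : NX) : Prop :=
  MAux X Q (Fintype.card NQ) nQ nX

/-- Fuelled version of the retrieval function; the fuel is the depth of the
query node (fuel 0 corresponds to the root case). -/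
def muRAux [Fintype NQ] (X : XMLDoc NX L) (Q : Query NQ L) : ℕ → NQ → Set NX
  | 0, nQ => {nX | nX = X.tree.root ∧ MPred X Q nQ nX}
  | k + 1, nQ => {nX | nX ≠ X.tree.root ∧ Matches X Q nX nQ ∧ MPred X Q nQ nX ∧
      X.tree.parent nX ∈ muRAux X Q k (Q.tree.parent nQ)}

/-- The retrieval function `μ_R` of `Query_Evaluate` w.r.t. `X` and `Q`:
`μ_R(r_Q) = {r_X}` if `M(r_Q, r_X)` holds and `∅` otherwise; for a non-root
query node `nQ`, `μ_R(nQ)` consists of the non-root document nodes `nX` that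
match `nQ`, satisfy `M(nQ, nX)`, and whose parent lies in `μ_R(p(nQ))`. -/
def muR [Fintype NQ] (X : XMLDoc NX L) (Q : Query NQ L) (nQ : NQ) : Set NX :=
  muRAux X Q (Q.tree.depth nQ) nQ

/-- Auxiliary: the list of labels along the path of given length ending at `n`. -/
def labelPathAux {N : Type} (t : RTree N) (lab : N → L) : ℕ → N → List L
  | 0, n => [lab n]
  | k + 1, n => labelPathAux t lab k (t.parent n) ++ [lab n]

/-- `path(n)`: the sequence of labels of the nodes along the unique directed
path from the root to `n` (including both the root and `n`). -/
def labelPath {N : Type} (t : RTree N) (lab : N → L) (n : N) : List L :=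
  labelPathAux t lab (t.depth n) n

/-- `N_out`: document nodes in the image of some projected node under some
satisfying matching. -/
def Nout (X : XMLDoc NX L) (Q : Query NQ L) : Set NX :=
  {nX | ∃ nO ∈ Q.proj, ∃ μ, IsSatisfying X Q μ ∧ nX ∈ μ nO}

/-- The output set `N_R = N_out ∪ N_anc ∪ N_desc` of `X` w.r.t. `Q`. -/
def OutputSet (X : XMLDoc NX L) (Q : Query NQ L) : Set NX :=
  Nout X Q ∪
  {nX | ∃ n'X ∈ Nout X Q, X.tree.IsAncestor nX n'X} ∪
  {nX | ∃ n'X ∈ Nout X Q, X.tree.IsAncestor n'X nX}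

end Defs

/-- the pointwise union of two matchings of `X` to `Q` is a
matching of `X` to `Q`. -/
theorem union_of_two_matchings {NX NQ L : Type} [Fintype NX] [Fintype NQ]
    (X : XMLDoc NX L) (Q : Query NQ L) (μ₁ μ₂ : NQ → Set NX)
    (h₁ : IsMatching X Q μ₁) (h₂ : IsMatching X Q μ₂) :
    IsMatching X Q (fun nQ => μ₁ nQ ∪ μ₂ nQ) := by
  obtain ⟨r1, m1, p1⟩ := h₁
  obtain ⟨r2, m2, p2⟩ := h₂
  refine ⟨by simp [r1, r2], ?_, ?_⟩
  · rintro nQ nX (h | h)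
    exacts [m1 nQ nX h, m2 nQ nX h]
  · rintro nQ nX (h | h) hne
    exacts [Or.inl (p1 nQ nX h hne), Or.inr (p2 nQ nX h hne)]
end

section
/- Let X be an XML document and Q a query. If μ₁ and μ₂ are satisfying matchings of X to Q, then their pointwise union μ, defined by μ(n_Q) = μ₁(n_Q) ∪ μ₂(n_Q) for every query node n_Q, is also a satisfying matching of X to Q. -/
/-- the pointwise union of two satisfying matchings of `X` to `Q`
is a satisfying matching of `X` to `Q`. -/
theorem union_of_two_satisfying_matchings {NX NQ L : Type} [Fintype NX] [Fintype NQ]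
    (X : XMLDoc NX L) (Q : Query NQ L) (μ₁ μ₂ : NQ → Set NX)
    (h₁ : IsSatisfying X Q μ₁) (h₂ : IsSatisfying X Q μ₂) :
    IsSatisfying X Q (fun nQ => μ₁ nQ ∪ μ₂ nQ) := by
  obtain ⟨⟨hr₁, hm₁, hp₁⟩, hs₁⟩ := h₁
  obtain ⟨⟨hr₂, hm₂, hp₂⟩, hs₂⟩ := h₂
  have mono : ∀ (μ : NQ → Set NX), (∀ n, μ n ⊆ μ₁ n ∪ μ₂ n) →
      ∀ nQ mQ nX, SatisfiesEdge X Q μ nQ mQ nX →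
        SatisfiesEdge X Q (fun n => μ₁ n ∪ μ₂ n) nQ mQ nX := by
    rintro μ hsub nQ mQ nX (⟨hq, mX, hc, hm, hmem⟩ | ⟨hq, hall⟩)
    · exact Or.inl ⟨hq, mX, hc, hm, hsub _ hmem⟩
    · exact Or.inr ⟨hq, fun mX hc hm => hsub _ (hall mX hc hm)⟩
  have mono1 := mono μ₁ (fun n => Set.subset_union_left)
  have mono2 := mono μ₂ (fun n => Set.subset_union_right)
  refine ⟨⟨?_, ?_, ?_⟩, ?_⟩
  · simp [hr₁, hr₂]
  · rintro nQ nX (h | h)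
    exacts [hm₁ nQ nX h, hm₂ nQ nX h]
  · rintro nQ nX (h | h) hne
    exacts [Or.inl (hp₁ nQ nX h hne), Or.inr (hp₂ nQ nX h hne)]
  · rintro nQ nX (h | h)
    · obtain ⟨ha, hb, hc⟩ := hs₁ nQ nX h
      refine ⟨ha, fun hl ho => ?_, fun hl ho => ?_⟩
      · rcases hb hl ho with h' | ⟨mQ, hch, he⟩
        exacts [Or.inl h', Or.inr ⟨mQ, hch, mono1 _ _ _ he⟩]
      · obtain ⟨h', hall⟩ := hc hl ho
        exact ⟨h', fun mQ hch => mono1 _ _ _ (hall mQ hch)⟩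
    · obtain ⟨ha, hb, hc⟩ := hs₂ nQ nX h
      refine ⟨ha, fun hl ho => ?_, fun hl ho => ?_⟩
      · rcases hb hl ho with h' | ⟨mQ, hch, he⟩
        exacts [Or.inl h', Or.inr ⟨mQ, hch, mono2 _ _ _ he⟩]
      · obtain ⟨h', hall⟩ := hc hl ho
        exact ⟨h', fun mQ hch => mono2 _ _ _ (hall mQ hch)⟩
end

section
/- (Union of Matchings) Let X be an XML document, let Q be a query, and let 𝓜 be the set of all satisfying matchings of X to Q. If 𝓜 is nonempty, then the pointwise union of all the satisfying matchings in 𝓜, i.e., the function μ* defined by μ*(n_Q) = ⋃_{μ ∈ 𝓜} μ(n_Q) for every query node n_Q, is itself a satisfying matching of X to Q (so μ* ∈ 𝓜). -/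
/-- Union of Matchings: if the set of all satisfying matchings
of `X` to `Q` is nonempty, then its pointwise union is itself a satisfying
matching of `X` to `Q`. -/
theorem union_of_all_satisfying_matchings {NX NQ L : Type} [Fintype NX] [Fintype NQ]
    (X : XMLDoc NX L) (Q : Query NQ L)
    (hne : ∃ μ, IsSatisfying X Q μ) :
    IsSatisfying X Q
      (fun nQ => ⋃ μ ∈ {μ : NQ → Set NX | IsSatisfying X Q μ}, μ nQ) := by
  obtain ⟨μ0, hμ0⟩ := hne
  set U : NQ → Set NX :=
    fun nQ => ⋃ μ ∈ {μ : NQ → Set NX | IsSatisfying X Q μ}, μ nQ with hU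
  have hsub : ∀ μ, IsSatisfying X Q μ → ∀ nQ, μ nQ ⊆ U nQ := by
    intro μ h nQ nX hx
    exact Set.mem_biUnion h hx
  have hmemU : ∀ nQ nX, nX ∈ U nQ → ∃ μ, IsSatisfying X Q μ ∧ nX ∈ μ nQ := by
    intro nQ nX hx
    rcases Set.mem_iUnion₂.1 hx with ⟨μ, hμ, hxm⟩
    exact ⟨μ, hμ, hxm⟩
  have hedge : ∀ μ, IsSatisfying X Q μ → ∀ nQ mQ nX,
      SatisfiesEdge X Q μ nQ mQ nX → SatisfiesEdge X Q U nQ mQ nX := by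
    intro μ h nQ mQ nX hs
    rcases hs with ⟨hq, n'X, hc, hm, hmem⟩ | ⟨hq, hall⟩
    · exact Or.inl ⟨hq, n'X, hc, hm, hsub μ h _ hmem⟩
    · exact Or.inr ⟨hq, fun n'X hc hm => hsub μ h _ (hall n'X hc hm)⟩
  refine ⟨⟨?_, ?_, ?_⟩, ?_⟩
  · apply Set.Subset.antisymm
    · intro nX hx
      rcases hmemU _ _ hx with ⟨μ, hμ, hxm⟩
      rw [hμ.1.1] at hxm
      exact hxm
    · intro nX hx
      have : nX ∈ μ0 Q.tree.root := by rw [hμ0.1.1]; exact hx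
      exact hsub μ0 hμ0 _ this
  · intro nQ nX hx
    rcases hmemU _ _ hx with ⟨μ, hμ, hxm⟩
    exact hμ.1.2.1 nQ nX hxm
  · intro nQ nX hx hroot
    rcases hmemU _ _ hx with ⟨μ, hμ, hxm⟩
    exact hsub μ hμ _ (hμ.1.2.2 nQ nX hxm hroot)
  · intro nQ nX hx
    rcases hmemU _ _ hx with ⟨μ, hμ, hxm⟩
    obtain ⟨h1, h2, h3⟩ := hμ.2 nQ nX hxm
    refine ⟨h1, ?_, ?_⟩
    · intro hleaf hor
      rcases h2 hleaf hor with hc | ⟨mQ, hmQ, hs⟩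
      · exact Or.inl hc
      · exact Or.inr ⟨mQ, hmQ, hedge μ hμ _ _ _ hs⟩
    · intro hleaf hand
      obtain ⟨hc, hall⟩ := h3 hleaf hand
      exact ⟨hc, fun mQ hmQ => hedge μ hμ _ _ _ (hall mQ hmQ)⟩
end

section
/- Let X be an XML document and Q a query. If there exists at least one satisfying matching of X to Q, then the set of satisfying matchings of X to Q, partially ordered by pointwise set inclusion (μ ≤ μ' iff μ(n_Q) ⊆ μ'(n_Q) for all query nodes n_Q), has a greatest element, namely the pointwise union of all satisfying matchings of X to Q. -/
/-- if there is at least one satisfying matching of `X` to `Q`,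
then the set of satisfying matchings, ordered by pointwise set inclusion, has
a greatest element, namely the pointwise union of all satisfying matchings. -/
theorem greatest_satisfying_matching {NX NQ L : Type} [Fintype NX] [Fintype NQ]
    (X : XMLDoc NX L) (Q : Query NQ L)
    (hne : ∃ μ, IsSatisfying X Q μ) :
    IsGreatest {μ : NQ → Set NX | IsSatisfying X Q μ}
      (fun nQ => ⋃ μ ∈ {μ : NQ → Set NX | IsSatisfying X Q μ}, μ nQ) := by
  classical
  set U : NQ → Set NX := fun nQ => ⋃ μ ∈ {μ : NQ → Set NX | IsSatisfying X Q μ}, μ nQ with hU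
  have hmem : ∀ nQ nX, nX ∈ U nQ ↔ ∃ μ, IsSatisfying X Q μ ∧ nX ∈ μ nQ := by
    intro nQ nX; simp [hU]
  have hle : ∀ μ, IsSatisfying X Q μ → ∀ nQ, μ nQ ⊆ U nQ := by
    intro μ hμ nQ nX hx; exact (hmem nQ nX).2 ⟨μ, hμ, hx⟩
  have hedge : ∀ μ, IsSatisfying X Q μ → ∀ nQ mQ nX,
      SatisfiesEdge X Q μ nQ mQ nX → SatisfiesEdge X Q U nQ mQ nX := by
    intro μ hμ nQ mQ nX h
    rcases h with ⟨hq, mX, hc, hm, hx⟩ | ⟨hq, hall⟩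
    · exact Or.inl ⟨hq, mX, hc, hm, hle μ hμ mQ hx⟩
    · exact Or.inr ⟨hq, fun mX hc hm => hle μ hμ mQ (hall mX hc hm)⟩
  constructor
  · constructor
    · refine ⟨?_, ?_, ?_⟩
      · ext nX
        rw [hmem]
        constructor
        · rintro ⟨μ, hμ, hx⟩
          rw [hμ.1.1] at hx; exact hx
        · intro hx
          obtain ⟨μ, hμ⟩ := hne
          refine ⟨μ, hμ, ?_⟩
          rw [hμ.1.1]; exact hx
      · intro nQ nX hx
        obtain ⟨μ, hμ, hx⟩ := (hmem nQ nX).1 hx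
        exact hμ.1.2.1 nQ nX hx
      · intro nQ nX hx hnr
        obtain ⟨μ, hμ, hx⟩ := (hmem nQ nX).1 hx
        exact hle μ hμ _ (hμ.1.2.2 nQ nX hx hnr)
    · intro nQ nX hx
      obtain ⟨μ, hμ, hx⟩ := (hmem nQ nX).1 hx
      obtain ⟨h1, h2, h3⟩ := hμ.2 nQ nX hx
      refine ⟨h1, ?_, ?_⟩
      · intro hnl hop
        rcases h2 hnl hop with h | ⟨mQ, hc, hs⟩
        · exact Or.inl h
        · exact Or.inr ⟨mQ, hc, hedge μ hμ _ _ _ hs⟩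
      · intro hnl hop
        obtain ⟨hct, hall⟩ := h3 hnl hop
        exact ⟨hct, fun mQ hc => hedge μ hμ _ _ _ (hall mQ hc)⟩
  · intro μ hμ nQ
    exact hle μ hμ nQ
end

section
/- Let X be an XML document and Q a query. If μ is a satisfying matching of X to Q and n_X ∈ μ(n_Q) for a query node n_Q and a document node n_X, then M(n_Q, n_X) = true. -/
lemma RTree.depth_iterate {N : Type} (t : RTree N) (n : N) :
    ∀ j, j ≤ t.depth n → t.depth (t.parent^[j] n) = t.depth n - j := by
  intro j
  induction j with
  | zero => simp
  | succ j ih =>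
    intro hj
    have hj' : j ≤ t.depth n := Nat.le_of_succ_le hj
    have hd := ih hj'
    have hne : t.parent^[j] n ≠ t.root := by
      intro he
      rw [he, t.depth_root] at hd
      omega
    have := t.depth_parent _ hne
    rw [Function.iterate_succ_apply']
    omega

lemma RTree.depth_lt_card {N : Type} [Fintype N] (t : RTree N) (n : N) :
    t.depth n < Fintype.card N := by
  have hinj : Function.Injective (fun j : Fin (t.depth n + 1) => t.parent^[j] n) := by
    intro a b hab
    have ha := t.depth_iterate n a (Nat.lt_succ_iff.mp a.isLt)
    have hb := t.depth_iterate n b (Nat.lt_succ_iff.mp b.isLt)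
    simp only at hab
    rw [hab, hb] at ha
    have : (a : ℕ) = b := by omega
    exact Fin.ext this
  have := Fintype.card_le_of_injective _ hinj
  simpa using this

lemma depth_child {N : Type} (t : RTree N) {n m : N} (h : t.IsChild n m) :
    t.depth m = t.depth n + 1 := by
  have := t.depth_parent m h.1
  rw [h.2] at this
  omega

lemma MAux_of_satisfying {NX NQ L : Type} [Fintype NQ]
    (X : XMLDoc NX L) (Q : Query NQ L) (μ : NQ → Set NX)
    (h : IsSatisfying X Q μ) :
    ∀ k nQ nX, nX ∈ μ nQ → Fintype.card NQ ≤ k + Q.tree.depth nQ →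
      MAux X Q k nQ nX := by
  intro k
  induction k with
  | zero =>
    intro nQ nX _ hle
    exact absurd hle (by have := Q.tree.depth_lt_card nQ; omega)
  | succ k ih =>
    intro nQ nX hm hle
    obtain ⟨hleaf, hor, hand⟩ := h.2 nQ nX hm
    by_cases hL : Q.tree.IsLeaf nQ
    · exact Or.inl ⟨hL, hleaf hL⟩
    · have hedge : ∀ mQ, Q.tree.IsChild nQ mQ → SatisfiesEdge X Q μ nQ mQ nX →
          SStatus X Q (MAux X Q k) nQ mQ nX := by
        intro mQ hc hs
        have hdep : Fintype.card NQ ≤ k + Q.tree.depth mQ := by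
          rw [depth_child Q.tree hc]; omega
        rcases hs with ⟨hq, mX, hcx, hmx, hmem⟩ | ⟨hq, hall⟩
        · exact Or.inl ⟨hq, mX, hcx, hmx, ih mQ mX hmem hdep⟩
        · exact Or.inr ⟨hq, fun mX hcx hmx => ih mQ mX (hall mX hcx hmx) hdep⟩
      cases hop : Q.op nQ with
      | and =>
        obtain ⟨hc, hall⟩ := hand hL hop
        exact Or.inr (Or.inr ⟨hL, hop, hc, fun mQ hcm => hedge mQ hcm (hall mQ hcm)⟩)
      | or =>
        rcases hor hL hop with hc | ⟨mQ, hcm, hs⟩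
        · exact Or.inr (Or.inl ⟨hL, hop, Or.inl hc⟩)
        · exact Or.inr (Or.inl ⟨hL, hop, Or.inr ⟨mQ, hcm, hedge mQ hcm hs⟩⟩)

/-- if `μ` is a satisfying matching of `X` to `Q` and
`nX ∈ μ nQ`, then `M(nQ, nX)` holds. -/
theorem M_of_satisfying_matching {NX NQ L : Type} [Fintype NX] [Fintype NQ]
    (X : XMLDoc NX L) (Q : Query NQ L) (μ : NQ → Set NX)
    (h : IsSatisfying X Q μ) (nQ : NQ) (nX : NX) (hm : nX ∈ μ nQ) :
    MPred X Q nQ nX := by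
  exact MAux_of_satisfying X Q μ h _ nQ nX hm (Nat.le_add_right _ _)
end
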